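/- arXiv:math-ph/0701064 — 2 statements merged into one kernel-verified Lean document; each statement's English description precedes it below -/
import Mathlib

section
/- There exists a constant c > 0 such that for all Schwartz vector fields u, v, w : ℝ³ → ℝ³, |∫_{ℝ³} ⟨(u·∇)v(x), w(x)⟩ dx| ≤ c · (∫_{ℝ³} (‖u(x)‖² + ‖Du(x)‖²) dx)^{1/2} · (∫_{ℝ³} (‖v(x)‖² + ‖Dv(x)‖² + ‖D²v(x)‖²) dx)^{1/2} · (∫_{ℝ³} ‖w(x)‖² dx)^{1/2}. -/
/-!
Pointwise, `|⟨(u·∇)v, w⟩| ≤ ‖Dv‖ ‖u‖ ‖w‖`, so Hölder's inequality with exponents `(4, 4, 2)`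
bounds the integral by `‖Dv‖_{L⁴} ‖u‖_{L⁴} ‖w‖_{L²}`. In dimension three the `L⁴` norm is
controlled by the `H¹` norm: `‖f‖_{L⁴}⁴ ≤ ‖f‖_{L²} ‖f‖_{L⁶}³` by Hölder, and
`‖f‖_{L⁶} ≲ ‖f‖_{H¹}` by the Gagliardo–Nirenberg–Sobolev inequality. Mathlib proves the latter
only for compactly supported functions; it extends to all `C¹` functions by multiplying with
dilated bump functions `φ(x / (n + 1))`, whose derivatives are bounded uniformly in `n`, and
passing to the limit with Fatou's lemma. Applied to `u` and to `Dv`, this gives the factors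
`‖u‖_{H¹}` and `‖v‖_{H²}`.
-/

open MeasureTheory Filter Module
open scoped ENNReal NNReal RealInnerProductSpace

section Cutoff

variable {E F : Type*} [NormedAddCommGroup E] [NormedSpace ℝ E] [HasContDiffBump E]
  [NormedAddCommGroup F] [NormedSpace ℝ F]

theorem ContDiffBump.norm_fderiv_comp_smul_le (φ : ContDiffBump (0 : E)) {M c : ℝ}
    (hM : ∀ x, ‖fderiv ℝ φ x‖ ≤ M) (hc : |c| ≤ 1) (x : E) :
    ‖fderiv ℝ (fun y ↦ φ (c • y)) x‖ ≤ M := by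
  rw [fderiv_comp_smul, norm_smul, Real.norm_eq_abs]
  exact (mul_le_of_le_one_left (norm_nonneg _) hc).trans (hM _)

theorem ContDiffBump.norm_fderiv_comp_smul_smul_le (φ : ContDiffBump (0 : E)) {M c : ℝ}
    (hM : ∀ x, ‖fderiv ℝ φ x‖ ≤ M) (hc : |c| ≤ 1) {f : E → F} {x : E}
    (hf : DifferentiableAt ℝ f x) :
    ‖fderiv ℝ (fun y ↦ φ (c • y) • f y) x‖ ≤ ‖fderiv ℝ f x‖ + M * ‖f x‖ := by
  have hφ : DifferentiableAt ℝ (fun y ↦ φ (c • y)) x :=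
    ((φ.contDiff (n := 1)).differentiable one_ne_zero _).comp x
      (differentiableAt_id.const_smul c)
  rw [fderiv_fun_smul hφ hf]
  refine (norm_add_le _ _).trans (add_le_add ?_ ?_)
  · rw [norm_smul, Real.norm_of_nonneg φ.nonneg]
    exact mul_le_of_le_one_left (norm_nonneg _) φ.le_one
  · rw [ContinuousLinearMap.norm_smulRight_apply]
    exact mul_le_mul_of_nonneg_right (φ.norm_fderiv_comp_smul_le hM hc x) (norm_nonneg _)

variable [MeasurableSpace E] [OpensMeasurableSpace E]

theorem ContDiffBump.eLpNorm_fderiv_comp_smul_smul_le (φ : ContDiffBump (0 : E)) {M c : ℝ}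
    (hM : ∀ x, ‖fderiv ℝ φ x‖ ≤ M) (hc : |c| ≤ 1) {f : E → F} (hf : ContDiff ℝ 1 f)
    (μ : Measure E) {p : ℝ≥0∞} (hp : 1 ≤ p) :
    eLpNorm (fderiv ℝ fun y ↦ φ (c • y) • f y) p μ ≤
      eLpNorm (fderiv ℝ f) p μ + ENNReal.ofReal M * eLpNorm f p μ := by
  have hM0 : 0 ≤ M := (norm_nonneg _).trans (hM 0)
  calc eLpNorm (fderiv ℝ fun y ↦ φ (c • y) • f y) p μ
      ≤ eLpNorm (fun x ↦ ‖fderiv ℝ f x‖ + M * ‖f x‖) p μ :=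
        eLpNorm_mono_real fun x ↦
          φ.norm_fderiv_comp_smul_smul_le hM hc (hf.differentiable one_ne_zero x)
    _ ≤ eLpNorm (fun x ↦ ‖fderiv ℝ f x‖) p μ + eLpNorm (fun x ↦ M * ‖f x‖) p μ :=
        eLpNorm_add_le (hf.continuous_fderiv one_ne_zero).norm.aestronglyMeasurable
          (continuous_const.mul hf.continuous.norm).aestronglyMeasurable hp
    _ = eLpNorm (fderiv ℝ f) p μ + ENNReal.ofReal M * eLpNorm f p μ := by
        rw [show (fun x ↦ M * ‖f x‖) = M • fun x ↦ ‖f x‖ from rfl, eLpNorm_const_smul,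
          eLpNorm_norm, eLpNorm_norm, Real.enorm_eq_ofReal hM0]

end Cutoff

section Holder

variable {α : Type*} [MeasurableSpace α] {μ : Measure α}

theorem eLpNorm_four_pow_le_eLpNorm_two_mul_eLpNorm_six_pow {F : Type*} [NormedAddCommGroup F]
    {f : α → F} (hf : AEStronglyMeasurable f μ) :
    eLpNorm f 4 μ ^ 4 ≤ eLpNorm f 2 μ * eLpNorm f 6 μ ^ 3 := by
  have h4 := eLpNorm_norm_rpow (p := 1) (μ := μ) f (q := 4) (by norm_num)
  have h3 := eLpNorm_norm_rpow (p := 2) (μ := μ) f (q := 3) (by norm_num)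
  norm_num at h4 h3
  rw [← h4, ← h3, ← eLpNorm_norm f]
  simp_rw [pow_succ' _ 3]
  simpa using eLpNorm_le_eLpNorm_mul_eLpNorm'_of_norm (p := 2) (q := 2) (r := 1) hf.norm
    (g := fun x ↦ ‖f x‖ ^ 3) (hf.norm.pow 3) (· * ·) 1 (ae_of_all _ fun x ↦ by simp)

theorem enorm_integral_inner_apply_le {E F : Type*} [NormedAddCommGroup E] [NormedSpace ℝ E]
    [NormedAddCommGroup F] [InnerProductSpace ℝ F] {A : α → E →L[ℝ] F} {u : α → E} {w : α → F}
    (hA : AEStronglyMeasurable A μ) (hu : AEStronglyMeasurable u μ)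
    (hw : AEStronglyMeasurable w μ) :
    ‖∫ x, ⟪A x (u x), w x⟫ ∂μ‖ₑ ≤ eLpNorm A 4 μ * eLpNorm u 4 μ * eLpNorm w 2 μ := by
  calc ‖∫ x, ⟪A x (u x), w x⟫ ∂μ‖ₑ ≤ eLpNorm (fun x ↦ ⟪A x (u x), w x⟫) 1 μ :=
        (enorm_integral_le_lintegral_enorm _).trans_eq eLpNorm_one_eq_lintegral_enorm.symm
    _ ≤ eLpNorm (fun x ↦ A x (u x)) 2 μ * eLpNorm w 2 μ := by
        simpa using eLpNorm_le_eLpNorm_mul_eLpNorm'_of_norm (p := 2) (q := 2) (r := 1)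
          (isBoundedBilinearMap_apply.continuous.comp_aestronglyMeasurable₂ hA hu) hw
          (fun a b ↦ ⟪a, b⟫) 1
          (ae_of_all _ fun x ↦ by simpa using norm_inner_le_norm (𝕜 := ℝ) _ _)
    _ ≤ eLpNorm A 4 μ * eLpNorm u 4 μ * eLpNorm w 2 μ := by
        have : ENNReal.HolderTriple 4 4 2 := ⟨by
          rw [← two_mul, show (4 : ℝ≥0∞) = 2 * 2 by norm_num, ENNReal.mul_inv (by simp) (by simp),
            ← mul_assoc, ENNReal.mul_inv_cancel (by simp) (by simp), one_mul]⟩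
        gcongr
        simpa using eLpNorm_le_eLpNorm_mul_eLpNorm'_of_norm (p := 4) (q := 4) (r := 2)
          hA hu (fun L v ↦ L v) 1 (ae_of_all _ fun x ↦ by simpa using (A x).le_opNorm (u x))

theorem eLpNorm_two_le_ofReal_sqrt_integral {F : Type*} [NormedAddCommGroup F] {f : α → F}
    {g : α → ℝ} (hf : AEStronglyMeasurable f μ) (hg : Integrable g μ)
    (hfg : ∀ x, ‖f x‖ ^ 2 ≤ g x) :
    eLpNorm f 2 μ ≤ ENNReal.ofReal √(∫ x, g x ∂μ) := by
  have hf2 : Integrable (fun x ↦ ‖f x‖ ^ 2) μ :=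
    hg.mono' (hf.norm.pow 2) (ae_of_all _ fun x ↦ by simpa using hfg x)
  rw [((memLp_two_iff_integrable_sq_norm hf).2 hf2).eLpNorm_eq_integral_rpow_norm two_ne_zero
    ENNReal.ofNat_ne_top, Real.sqrt_eq_rpow]
  norm_num
  exact ENNReal.ofReal_le_ofReal <| Real.rpow_le_rpow (integral_nonneg fun _ ↦ by positivity)
    (integral_mono hf2 hg hfg) (by norm_num)

end Holder

section Sobolev

variable {E F : Type*} [NormedAddCommGroup E] [NormedSpace ℝ E] [FiniteDimensional ℝ E]
  [MeasurableSpace E] [BorelSpace E] [NormedAddCommGroup F] [NormedSpace ℝ F]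
  [FiniteDimensional ℝ F] (μ : Measure E) [μ.IsAddHaarMeasure]

theorem exists_eLpNorm_le_eLpNorm_add_eLpNorm_fderiv {p p' : ℝ≥0} (hp : 1 ≤ p)
    (hn : 0 < finrank ℝ E) (hp' : (p' : ℝ)⁻¹ = p⁻¹ - (finrank ℝ E : ℝ)⁻¹) :
    ∃ C : ℝ≥0, ∀ f : E → F, ContDiff ℝ 1 f →
      eLpNorm f p' μ ≤ C * (eLpNorm f p μ + eLpNorm (fderiv ℝ f) p μ) := by
  let φ : ContDiffBump (0 : E) := ⟨1, 2, one_pos, one_lt_two⟩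
  obtain ⟨M, hM⟩ := (φ.hasCompactSupport.fderiv ℝ).exists_bound_of_continuous
    ((φ.contDiff (n := 1)).continuous_fderiv one_ne_zero)
  let K := SNormLESNormFDerivOfEqConst F μ p
  refine ⟨K * (1 + M.toNNReal), fun f hf ↦ ?_⟩
  let χf : ℕ → E → F := fun n y ↦ φ ((n + 1 : ℝ)⁻¹ • y) • f y
  have hc : ∀ n : ℕ, |((n + 1 : ℝ))⁻¹| ≤ 1 := fun n ↦ by
    rw [abs_inv, inv_le_one₀ (by positivity)]
    exact le_abs.2 (Or.inl (by linarith [n.cast_nonneg (α := ℝ)]))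
  have hχf_cont : ∀ n, Continuous (χf n) := fun n ↦
    (φ.continuous.comp (continuous_const_smul _)).smul hf.continuous
  refine Lp.eLpNorm_le_of_ae_tendsto (u := atTop) (Eventually.of_forall fun n ↦ ?_)
    (fun n ↦ (hχf_cont n).aestronglyMeasurable) (ae_of_all _ fun x ↦ ?_)
  · have hχf_supp : HasCompactSupport (χf n) :=
      (φ.hasCompactSupport.comp_smul (by positivity)).smul_right
    have hχf_diff : ContDiff ℝ 1 (χf n) :=
      (φ.contDiff.comp (contDiff_const_smul _)).smul hf
    calc eLpNorm (χf n) p' μ ≤ K * eLpNorm (fderiv ℝ (χf n)) p μ :=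
          eLpNorm_le_eLpNorm_fderiv_of_eq μ hχf_diff hχf_supp hp hn hp'
      _ ≤ K * (eLpNorm (fderiv ℝ f) p μ + ENNReal.ofReal M * eLpNorm f p μ) := by
          gcongr
          exact φ.eLpNorm_fderiv_comp_smul_smul_le hM (hc n) hf μ (by exact_mod_cast hp)
      _ ≤ K * (1 + M.toNNReal) * (eLpNorm f p μ + eLpNorm (fderiv ℝ f) p μ) := by
          rw [mul_assoc, add_mul, one_mul]
          gcongr K * ?_
          exact add_le_add le_add_self (mul_le_mul_right le_self_add _)
  · refine tendsto_const_nhds.congr' ?_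
    filter_upwards [eventually_ge_atTop ⌈‖x‖⌉₊] with n hn
    have hx : ‖x‖ ≤ n + 1 := (Nat.le_ceil _).trans (by exact_mod_cast hn.trans n.le_succ)
    suffices φ ((n + 1 : ℝ)⁻¹ • x) = 1 by simp [χf, this]
    refine φ.one_of_mem_closedBall ?_
    rw [mem_closedBall_zero_iff, norm_smul, norm_inv, Real.norm_of_nonneg (by positivity)]
    exact inv_mul_le_one_of_le₀ hx (by positivity)

theorem exists_eLpNorm_four_le_eLpNorm_add_eLpNorm_fderiv (hE : finrank ℝ E = 3) :
    ∃ C : ℝ≥0, ∀ f : E → F, ContDiff ℝ 1 f →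
      eLpNorm f 4 μ ≤ C * (eLpNorm f 2 μ + eLpNorm (fderiv ℝ f) 2 μ) := by
  obtain ⟨C, hC⟩ := exists_eLpNorm_le_eLpNorm_add_eLpNorm_fderiv (F := F) μ (p := 2) (p' := 6)
    one_le_two (by omega) (by rw [hE]; norm_num)
  -- enlarging the constant to be `≥ 1` lets the `L²` factor be absorbed as well
  refine ⟨C + 1, fun f hf ↦ ?_⟩
  set T := eLpNorm f 2 μ + eLpNorm (fderiv ℝ f) 2 μ
  have h2 : eLpNorm f 2 μ ≤ T := le_self_add
  have h6 : eLpNorm f 6 μ ≤ (C + 1 : ℝ≥0) * T := by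
    have := hC f hf
    push_cast at this ⊢
    exact this.trans (by gcongr; exact le_self_add)
  rw [← ENNReal.pow_le_pow_left_iff four_ne_zero]
  calc eLpNorm f 4 μ ^ 4 ≤ eLpNorm f 2 μ * eLpNorm f 6 μ ^ 3 :=
        eLpNorm_four_pow_le_eLpNorm_two_mul_eLpNorm_six_pow hf.continuous.aestronglyMeasurable
    _ ≤ ((C + 1 : ℝ≥0) * T) * ((C + 1 : ℝ≥0) * T) ^ 3 := by
        gcongr
        exact h2.trans (le_mul_of_one_le_left' (by simp))
    _ = ((C + 1 : ℝ≥0) * T) ^ 4 := by ring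

end Sobolev

theorem norm_iteratedFDeriv_two {𝕜 E F : Type*} [NontriviallyNormedField 𝕜]
    [NormedAddCommGroup E] [NormedSpace 𝕜 E] [NormedAddCommGroup F] [NormedSpace 𝕜 F]
    (f : E → F) (x : E) : ‖iteratedFDeriv 𝕜 2 f x‖ = ‖fderiv 𝕜 (fderiv 𝕜 f) x‖ := by
  rw [← norm_iteratedFDeriv_fderiv (n := 1), norm_iteratedFDeriv_one]

theorem SchwartzMap.integrable_norm_sq {E F : Type*} [NormedAddCommGroup E] [NormedSpace ℝ E]
    [NormedAddCommGroup F] [NormedSpace ℝ F] [MeasurableSpace E] [BorelSpace E]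
    [SecondCountableTopology E] (f : SchwartzMap E F) (μ : Measure E) [μ.HasTemperateGrowth] :
    Integrable (fun x ↦ ‖f x‖ ^ 2) μ :=
  (f.memLp 2 μ).integrable_norm_pow two_ne_zero

/-- **The trilinear estimate `|⟨C(u,v),w⟩| ≤ c‖A^{1/2}u‖·‖Av‖·‖w‖` in concrete
Sobolev form.** There is `c > 0` such that for all Schwartz vector fields
`u, v, w : ℝ³ → ℝ³`,
`|∫ ⟨(u·∇)v, w⟩| ≤ c·(∫ ‖u‖²+‖Du‖²)^{1/2}·(∫ ‖v‖²+‖Dv‖²+‖D²v‖²)^{1/2}·(∫ ‖w‖²)^{1/2}`. -/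
theorem stmt_13 :
    ∃ c : ℝ, 0 < c ∧
      ∀ u v w : SchwartzMap (EuclideanSpace ℝ (Fin 3)) (EuclideanSpace ℝ (Fin 3)),
        |∫ x : EuclideanSpace ℝ (Fin 3), ⟪fderiv ℝ (⇑v) x (u x), w x⟫| ≤
          c * Real.sqrt (∫ x : EuclideanSpace ℝ (Fin 3),
                (‖u x‖ ^ 2 + ‖fderiv ℝ (⇑u) x‖ ^ 2)) *
            Real.sqrt (∫ x : EuclideanSpace ℝ (Fin 3),
                (‖v x‖ ^ 2 + ‖fderiv ℝ (⇑v) x‖ ^ 2 + ‖iteratedFDeriv ℝ 2 (⇑v) x‖ ^ 2)) *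
            Real.sqrt (∫ x : EuclideanSpace ℝ (Fin 3), ‖w x‖ ^ 2) := by
  obtain ⟨C₁, hC₁⟩ := exists_eLpNorm_four_le_eLpNorm_add_eLpNorm_fderiv
    (F := EuclideanSpace ℝ (Fin 3)) volume finrank_euclideanSpace_fin
  obtain ⟨C₂, hC₂⟩ := exists_eLpNorm_four_le_eLpNorm_add_eLpNorm_fderiv
    (F := EuclideanSpace ℝ (Fin 3) →L[ℝ] EuclideanSpace ℝ (Fin 3)) volume
    finrank_euclideanSpace_fin
  refine ⟨(4 * C₁ * C₂ + 1 : ℝ≥0), by positivity, fun u v w ↦ ?_⟩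
  let Du := SchwartzMap.fderivCLM ℝ _ _ u
  let Dv := SchwartzMap.fderivCLM ℝ _ _ v
  let D2v := SchwartzMap.fderivCLM ℝ _ _ Dv
  simp only [norm_iteratedFDeriv_two]
  have hu : eLpNorm u 4 volume ≤
      C₁ * (2 * ENNReal.ofReal √(∫ x, (‖u x‖ ^ 2 + ‖fderiv ℝ u x‖ ^ 2))) := by
    have hint := (u.integrable_norm_sq volume).add (Du.integrable_norm_sq volume)
    refine (hC₁ u (u.smooth 1)).trans ?_
    rw [two_mul]
    gcongr
    · exact eLpNorm_two_le_ofReal_sqrt_integral u.continuous.aestronglyMeasurable hint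
        fun x ↦ le_add_of_nonneg_right (by positivity)
    · exact eLpNorm_two_le_ofReal_sqrt_integral Du.continuous.aestronglyMeasurable hint
        fun x ↦ le_add_of_nonneg_left (by positivity)
  have hDv : eLpNorm Dv 4 volume ≤ C₂ * (2 * ENNReal.ofReal
      √(∫ x, (‖v x‖ ^ 2 + ‖fderiv ℝ v x‖ ^ 2 + ‖fderiv ℝ (fderiv ℝ v) x‖ ^ 2))) := by
    have hint := ((v.integrable_norm_sq volume).add (Dv.integrable_norm_sq volume)).add
      (D2v.integrable_norm_sq volume)
    refine (hC₂ Dv (Dv.smooth 1)).trans ?_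
    rw [two_mul]
    gcongr
    · exact eLpNorm_two_le_ofReal_sqrt_integral Dv.continuous.aestronglyMeasurable hint
        fun x ↦ le_add_of_le_of_nonneg (le_add_of_nonneg_left (by positivity)) (by positivity)
    · exact eLpNorm_two_le_ofReal_sqrt_integral D2v.continuous.aestronglyMeasurable hint
        fun x ↦ le_add_of_nonneg_left (by positivity)
  have hw : eLpNorm w 2 volume ≤ ENNReal.ofReal √(∫ x, ‖w x‖ ^ 2) :=
    eLpNorm_two_le_ofReal_sqrt_integral w.continuous.aestronglyMeasurable
      (w.integrable_norm_sq volume) fun x ↦ le_rfl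
  rw [← ENNReal.ofReal_le_ofReal_iff (by positivity), ← Real.enorm_eq_ofReal_abs]
  refine (enorm_integral_inner_apply_le Dv.continuous.aestronglyMeasurable
    u.continuous.aestronglyMeasurable w.continuous.aestronglyMeasurable).trans ?_
  generalize ∫ x, (‖u x‖ ^ 2 + ‖fderiv ℝ u x‖ ^ 2) = A at hu ⊢
  generalize ∫ x, (‖v x‖ ^ 2 + ‖fderiv ℝ v x‖ ^ 2 + ‖fderiv ℝ (fderiv ℝ v) x‖ ^ 2) = B at hDv ⊢
  generalize ∫ x, ‖w x‖ ^ 2 = W at hw ⊢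
  rw [ENNReal.ofReal_mul (by positivity), ENNReal.ofReal_mul (by positivity),
    ENNReal.ofReal_mul (by positivity), ENNReal.ofReal_coe_nnreal]
  calc _ ≤ C₂ * (2 * ENNReal.ofReal √B) * (C₁ * (2 * ENNReal.ofReal √A)) * ENNReal.ofReal √W :=
        mul_le_mul' (mul_le_mul' hDv hu) hw
    _ = (4 * C₁ * C₂ : ℝ≥0) * ENNReal.ofReal √A * ENNReal.ofReal √B * ENNReal.ofReal √W := by
        push_cast; ring
    _ ≤ _ := by gcongr; exact le_self_add
end

section
/- There exists a constant c > 0 such that for all Schwartz vector fields u, v : ℝ³ → ℝ³, (∫_{ℝ³} ‖(u·∇)v(x)‖² dx)^{1/2} ≤ c · (∫_{ℝ³} (‖u(x)‖² + ‖Du(x)‖² + ‖D²u(x)‖²) dx)^{1/2} · (∫_{ℝ³} (‖v(x)‖² + ‖Dv(x)‖² + ‖D²v(x)‖²) dx)^{1/2}. -/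
/-!
By Hölder, `‖(u·∇)v‖₂ ≤ ‖u‖₆ ‖Dv‖₃`. In dimension three the Gagliardo–Nirenberg–Sobolev
inequality `‖f‖₆ ≲ ‖Df‖₂` for compactly supported `f` extends, through the cutoffs
`χ(x / (n + 1)) f` and Fatou's lemma, to `‖f‖₆ ≲ ‖Df‖₂ + ‖f‖₂` for every `C¹` function `f`.
Applied to `u` this bounds `‖u‖₆` by the `H²` norm of `u`. For `Dv` we interpolate,
`‖Dv‖₃ ≤ ‖Dv‖₂^{1/2} ‖Dv‖₆^{1/2}`, and apply the same inequality to `Dv`, so `‖Dv‖₃` is bounded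
by the `H²` norm of `v`.
-/

open MeasureTheory Filter Topology
open scoped ENNReal NNReal ContDiff SchwartzMap

section Interpolation

variable {α E : Type*} {m : MeasurableSpace α} {μ : Measure α} [NormedAddCommGroup E]

theorem eLpNorm_le_eLpNorm_rpow_half_mul_eLpNorm_rpow_half {p q r : ℝ≥0∞}
    (hpqr : p⁻¹ + r⁻¹ = 2 * q⁻¹) {f : α → E} (hf : AEStronglyMeasurable f μ) :
    eLpNorm f q μ ≤ eLpNorm f p μ ^ (2⁻¹ : ℝ) * eLpNorm f r μ ^ (2⁻¹ : ℝ) := by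
  have half_mul_two (s : ℝ≥0∞) : s * 2 * ENNReal.ofReal 2⁻¹ = s := by
    rw [ENNReal.ofReal_inv_of_pos two_pos, ENNReal.ofReal_ofNat, mul_assoc,
      ENNReal.mul_inv_cancel two_ne_zero ENNReal.ofNat_ne_top, mul_one]
  -- `‖f‖ = ‖f‖^(1/2) * ‖f‖^(1/2)`, and Hölder with exponents `2p, 2r, q`
  have : ENNReal.HolderTriple (p * 2) (r * 2) q := ⟨by
    rw [ENNReal.mul_inv (.inr ENNReal.ofNat_ne_top) (.inr two_ne_zero),
      ENNReal.mul_inv (.inr ENNReal.ofNat_ne_top) (.inr two_ne_zero), ← add_mul, hpqr,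
      mul_comm, ← mul_assoc, ENNReal.inv_mul_cancel two_ne_zero ENNReal.ofNat_ne_top, one_mul]⟩
  have hsqrt : AEStronglyMeasurable (fun x => ‖f x‖ ^ (2⁻¹ : ℝ)) μ :=
    (hf.norm.aemeasurable.pow_const _).aestronglyMeasurable
  have h := eLpNorm_le_eLpNorm_mul_eLpNorm'_of_norm (p := p * 2) (q := r * 2) (r := q)
    hsqrt hsqrt (· * ·) 1 (.of_forall fun x => by simp [norm_mul])
  have hsq : (fun x => ‖f x‖ ^ (2⁻¹ : ℝ) * ‖f x‖ ^ (2⁻¹ : ℝ)) = fun x => ‖f x‖ := by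
    ext x
    rw [← Real.rpow_add' (norm_nonneg _) (by norm_num)]
    norm_num
  rw [hsq, eLpNorm_norm, eLpNorm_norm_rpow _ (by norm_num), eLpNorm_norm_rpow _ (by norm_num),
    half_mul_two, half_mul_two] at h
  simpa using h

end Interpolation

section L2

variable {α E : Type*} {m : MeasurableSpace α} {μ : Measure α} [NormedAddCommGroup E]

theorem eLpNorm_two_eq_lintegral_sq (g : α → E) :
    eLpNorm g 2 μ = (∫⁻ x, ENNReal.ofReal (‖g x‖ ^ 2) ∂μ) ^ (2⁻¹ : ℝ) := by
  simp [eLpNorm_eq_lintegral_rpow_enorm_toReal two_ne_zero ENNReal.ofNat_ne_top,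
    ENNReal.ofReal_pow]

theorem sqrt_integral_norm_sq_le_toReal_eLpNorm (g : α → E) :
    √(∫ x, ‖g x‖ ^ 2 ∂μ) ≤ (eLpNorm g 2 μ).toReal := by
  by_cases hg : Integrable (fun x => ‖g x‖ ^ 2) μ
  · rw [integral_eq_lintegral_of_nonneg_ae (.of_forall fun x => by positivity) hg.1,
      eLpNorm_two_eq_lintegral_sq, ← ENNReal.toReal_rpow, Real.sqrt_eq_rpow, inv_eq_one_div]
  · simp [integral_undef hg]

theorem eLpNorm_two_le_ofReal_sqrt_integral_s14 {g : α → E} {X : α → ℝ} (hX : Integrable X μ)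
    (hgX : ∀ᵐ x ∂μ, ‖g x‖ ^ 2 ≤ X x) :
    eLpNorm g 2 μ ≤ ENNReal.ofReal √(∫ x, X x ∂μ) := by
  have hX0 : 0 ≤ᵐ[μ] X := hgX.mono fun x hx => (sq_nonneg _).trans hx
  rw [eLpNorm_two_eq_lintegral_sq, Real.sqrt_eq_rpow, ← inv_eq_one_div,
    ← ENNReal.ofReal_rpow_of_nonneg (integral_nonneg_of_ae hX0) (by norm_num),
    ofReal_integral_eq_lintegral_ofReal hX hX0]
  gcongr ?_ ^ _
  exact lintegral_mono_ae (hgX.mono fun x hx => ENNReal.ofReal_le_ofReal hx)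

end L2

section Sobolev

variable {E F : Type*} [NormedAddCommGroup E] [NormedSpace ℝ E] [NormedAddCommGroup F]
  [NormedSpace ℝ F]

theorem exists_cutoff_seq [FiniteDimensional ℝ E] :
    ∃ M : ℝ≥0, ∃ χ : ℕ → E → ℝ, (∀ n, ContDiff ℝ ∞ (χ n) ∧ HasCompactSupport (χ n)) ∧
      (∀ n x, ‖χ n x‖ ≤ 1) ∧ (∀ n x, ‖fderiv ℝ (χ n) x‖ ≤ M) ∧
      ∀ x, ∀ᶠ n in atTop, χ n x = 1 := by
  let φ : ContDiffBump (0 : E) := ⟨1, 2, one_pos, one_lt_two⟩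
  obtain ⟨M, hM⟩ := ((φ.contDiff (n := 1)).continuous_fderiv one_ne_zero
    ).bounded_above_of_compact_support (φ.hasCompactSupport.fderiv (𝕜 := ℝ))
  let c : ℕ → ℝ := fun n => ((n : ℝ) + 1)⁻¹
  have hc0 : ∀ n, 0 < c n := fun n => by positivity
  refine ⟨M.toNNReal, fun n x => φ (c n • x), fun n => ⟨φ.contDiff.comp (contDiff_const_smul _),
    φ.hasCompactSupport.comp_homeomorph (Homeomorph.smulOfNeZero _ (hc0 n).ne')⟩,
    fun n x => ?_, fun n x => ?_, fun x => ?_⟩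
  · rw [Real.norm_of_nonneg φ.nonneg]
    exact φ.le_one
  · rw [fderiv_comp_smul, norm_smul, Real.norm_of_nonneg (hc0 n).le]
    calc c n * ‖fderiv ℝ φ (c n • x)‖ ≤ 1 * M.toNNReal :=
          mul_le_mul (inv_le_one_of_one_le₀ (by simp)) ((hM _).trans M.le_coe_toNNReal)
            (norm_nonneg _) zero_le_one
      _ = M.toNNReal := one_mul _
  · filter_upwards [eventually_ge_atTop ⌈‖x‖⌉₊] with n hn
    apply φ.one_of_mem_closedBall
    rw [mem_closedBall_zero_iff, norm_smul, Real.norm_of_nonneg (hc0 n).le]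
    have hx : ‖x‖ ≤ n := (Nat.le_ceil _).trans (by exact_mod_cast hn)
    change ((n : ℝ) + 1)⁻¹ * ‖x‖ ≤ 1
    rw [inv_mul_le_one₀ (by positivity)]
    linarith

theorem eLpNorm_fderiv_smul_le [FiniteDimensional ℝ E] [MeasurableSpace E] [BorelSpace E]
    (μ : Measure E) {χ : E → ℝ} {f : E → F} {M : ℝ≥0} (hχ : ContDiff ℝ 1 χ)
    (hf : ContDiff ℝ 1 f) (hχ_le : ∀ x, ‖χ x‖ ≤ 1) (hDχ_le : ∀ x, ‖fderiv ℝ χ x‖ ≤ M)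
    {p : ℝ≥0∞} (hp : 1 ≤ p) :
    eLpNorm (fderiv ℝ (fun x => χ x • f x)) p μ ≤
      eLpNorm (fderiv ℝ f) p μ + M * eLpNorm f p μ := by
  have hχ' := hχ.continuous_fderiv one_ne_zero
  have hf' := hf.continuous_fderiv one_ne_zero
  have hD : fderiv ℝ (fun x => χ x • f x) =
      fun x => χ x • fderiv ℝ f x + (fderiv ℝ χ x).smulRight (f x) :=
    funext fun x =>
      fderiv_smul (hχ.differentiable one_ne_zero x) (hf.differentiable one_ne_zero x)
  rw [hD]
  refine (eLpNorm_add_le (f := fun x => χ x • fderiv ℝ f x)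
    (g := fun x => (fderiv ℝ χ x).smulRight (f x)) (hχ.continuous.smul hf').aestronglyMeasurable
    (((ContinuousLinearMap.smulRightL ℝ E F).continuous.comp hχ').clm_apply
      hf.continuous).aestronglyMeasurable hp).trans (add_le_add ?_ ?_)
  · refine eLpNorm_mono fun x => ?_
    rw [norm_smul]
    exact mul_le_of_le_one_left (norm_nonneg _) (hχ_le x)
  · rw [← ENNReal.ofReal_coe_nnreal]
    refine eLpNorm_le_mul_eLpNorm_of_ae_le_mul (.of_forall fun x => ?_) p
    rw [ContinuousLinearMap.norm_smulRight_apply]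
    exact mul_le_mul_of_nonneg_right (hDχ_le x) (norm_nonneg _)

theorem exists_eLpNorm_le_mul_eLpNorm_fderiv_add_eLpNorm [FiniteDimensional ℝ E]
    [FiniteDimensional ℝ F] [MeasurableSpace E] [BorelSpace E] (μ : Measure E)
    [μ.IsAddHaarMeasure] {p p' : ℝ≥0} (hp : 1 ≤ p) (hn : 0 < Module.finrank ℝ E)
    (hp' : (p' : ℝ)⁻¹ = p⁻¹ - (Module.finrank ℝ E : ℝ)⁻¹) :
    ∃ C : ℝ≥0, ∀ f : E → F, ContDiff ℝ 1 f →
      eLpNorm f p' μ ≤ C * (eLpNorm (fderiv ℝ f) p μ + eLpNorm f p μ) := by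
  obtain ⟨M, χ, hχ, hχ_le, hDχ_le, hχ_one⟩ := exists_cutoff_seq (E := E)
  set C₀ := SNormLESNormFDerivOfEqConst F μ p
  refine ⟨C₀ * (1 + M), fun f hf => ?_⟩
  have hχf (n : ℕ) : eLpNorm (fun x => χ n x • f x) p' μ ≤
      C₀ * (eLpNorm (fderiv ℝ f) p μ + M * eLpNorm f p μ) := by
    have hχn : ContDiff ℝ 1 (χ n) := (hχ n).1.of_le (by norm_num)
    refine (eLpNorm_le_eLpNorm_fderiv_of_eq μ (hχn.smul hf) (hχ n).2.smul_right hp hn hp').trans ?_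
    gcongr
    exact eLpNorm_fderiv_smul_le μ hχn hf (hχ_le n) (hDχ_le n) (by exact_mod_cast hp)
  have hlim : ∀ x, Tendsto (fun n => χ n x • f x) atTop (𝓝 (f x)) := fun x =>
    tendsto_const_nhds.congr' <| (hχ_one x).mono fun n hn => by simp [hn]
  calc eLpNorm f p' μ ≤ atTop.liminf fun n => eLpNorm (fun x => χ n x • f x) p' μ :=
        Lp.eLpNorm_lim_le_liminf_eLpNorm
          (fun n => ((hχ n).1.continuous.smul hf.continuous).aestronglyMeasurable) f
          (.of_forall hlim)
    _ ≤ C₀ * (eLpNorm (fderiv ℝ f) p μ + M * eLpNorm f p μ) :=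
        (liminf_le_liminf (.of_forall hχf)).trans_eq (liminf_const _)
    _ ≤ C₀ * (1 + M) * (eLpNorm (fderiv ℝ f) p μ + eLpNorm f p μ) := by
        rw [mul_assoc, add_mul, one_mul]
        gcongr
        exacts [le_self_add, le_add_self]

end Sobolev

section H2

variable {E F : Type*} [NormedAddCommGroup E] [NormedSpace ℝ E] [NormedAddCommGroup F]
  [NormedSpace ℝ F]

theorem norm_fderiv_fderiv_eq_norm_iteratedFDeriv_two (f : E → F) (x : E) :
    ‖fderiv ℝ (fderiv ℝ f) x‖ = ‖iteratedFDeriv ℝ 2 f x‖ := by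
  rw [← norm_iteratedFDeriv_fderiv, norm_iteratedFDeriv_one]

theorem SchwartzMap.coe_fderivCLM (f : 𝓢(E, F)) : ⇑(fderivCLM ℝ E F f) = fderiv ℝ f :=
  funext (fderivCLM_apply ℝ f)

variable [MeasurableSpace E]

noncomputable def sobolevH2Norm (μ : Measure E) (f : E → F) : ℝ :=
  √(∫ x, ‖f x‖ ^ 2 + ‖fderiv ℝ f x‖ ^ 2 + ‖iteratedFDeriv ℝ 2 f x‖ ^ 2 ∂μ)

namespace SchwartzMap

variable [FiniteDimensional ℝ E] [BorelSpace E] (μ : Measure E) [μ.HasTemperateGrowth]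

theorem integrable_norm_sq_s14 (f : 𝓢(E, F)) : Integrable (fun x => ‖f x‖ ^ 2) μ :=
  (f.memLp 2 μ).integrable_norm_pow two_ne_zero

theorem eLpNorm_le_sobolevH2Norm (f : 𝓢(E, F)) :
    eLpNorm f 2 μ ≤ .ofReal (sobolevH2Norm μ f) ∧
      eLpNorm (fderiv ℝ f) 2 μ ≤ .ofReal (sobolevH2Norm μ f) ∧
      eLpNorm (fderiv ℝ (fderiv ℝ f)) 2 μ ≤ .ofReal (sobolevH2Norm μ f) := by
  have hDf : Integrable (fun x => ‖fderiv ℝ f x‖ ^ 2) μ := by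
    simpa only [coe_fderivCLM] using integrable_norm_sq_s14 μ (fderivCLM ℝ E F f)
  have hDDf : Integrable (fun x => ‖iteratedFDeriv ℝ 2 f x‖ ^ 2) μ := by
    simpa only [coe_fderivCLM, norm_fderiv_fderiv_eq_norm_iteratedFDeriv_two] using
      integrable_norm_sq_s14 μ (fderivCLM ℝ E _ (fderivCLM ℝ E F f))
  have hI : Integrable
      (fun x => ‖f x‖ ^ 2 + ‖fderiv ℝ f x‖ ^ 2 + ‖iteratedFDeriv ℝ 2 f x‖ ^ 2) μ :=
    ((integrable_norm_sq_s14 μ f).add hDf).add hDDf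
  have hle (x : E) : ‖f x‖ ^ 2 ≤ ‖f x‖ ^ 2 + ‖fderiv ℝ f x‖ ^ 2 + ‖iteratedFDeriv ℝ 2 f x‖ ^ 2 ∧
      ‖fderiv ℝ f x‖ ^ 2 ≤ ‖f x‖ ^ 2 + ‖fderiv ℝ f x‖ ^ 2 + ‖iteratedFDeriv ℝ 2 f x‖ ^ 2 ∧
      ‖fderiv ℝ (fderiv ℝ f) x‖ ^ 2 ≤
        ‖f x‖ ^ 2 + ‖fderiv ℝ f x‖ ^ 2 + ‖iteratedFDeriv ℝ 2 f x‖ ^ 2 := by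
    rw [norm_fderiv_fderiv_eq_norm_iteratedFDeriv_two]
    refine ⟨?_, ?_, ?_⟩ <;>
      linarith [sq_nonneg ‖f x‖, sq_nonneg ‖fderiv ℝ f x‖, sq_nonneg ‖iteratedFDeriv ℝ 2 f x‖]
  exact ⟨eLpNorm_two_le_ofReal_sqrt_integral_s14 hI (.of_forall fun x => (hle x).1),
    eLpNorm_two_le_ofReal_sqrt_integral_s14 hI (.of_forall fun x => (hle x).2.1),
    eLpNorm_two_le_ofReal_sqrt_integral_s14 (g := fderiv ℝ (fderiv ℝ f)) hI
      (.of_forall fun x => (hle x).2.2)⟩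

theorem eLpNorm_fderiv_apply_le {G : Type*} [NormedAddCommGroup G] [NormedSpace ℝ G]
    {C C' : ℝ≥0}
    (hC : ∀ f : 𝓢(E, E), eLpNorm f 6 μ ≤ C * (eLpNorm (fderiv ℝ f) 2 μ + eLpNorm f 2 μ))
    (hC' : ∀ f : 𝓢(E, E →L[ℝ] G),
      eLpNorm f 6 μ ≤ C' * (eLpNorm (fderiv ℝ f) 2 μ + eLpNorm f 2 μ))
    (u : 𝓢(E, E)) (v : 𝓢(E, G)) :
    eLpNorm (fun x => fderiv ℝ v x (u x)) 2 μ ≤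
      2 * C * (2 * C') ^ (2⁻¹ : ℝ) * .ofReal (sobolevH2Norm μ u) *
        .ofReal (sobolevH2Norm μ v) := by
  set A := ENNReal.ofReal (sobolevH2Norm μ u)
  set B := ENNReal.ofReal (sobolevH2Norm μ v)
  obtain ⟨hu, hDu, -⟩ := eLpNorm_le_sobolevH2Norm μ u
  obtain ⟨-, hDv, hDDv⟩ := eLpNorm_le_sobolevH2Norm μ v
  have hDv_cont : Continuous (fderiv ℝ v) := by
    rw [← coe_fderivCLM]; exact (fderivCLM ℝ E G v).continuous
  have hu6 : eLpNorm u 6 μ ≤ C * (2 * A) := (hC u).trans (by rw [two_mul]; gcongr)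
  have hDv6 : eLpNorm (fderiv ℝ v) 6 μ ≤ C' * (2 * B) := by
    have := hC' (fderivCLM ℝ E G v)
    simp only [coe_fderivCLM] at this
    exact this.trans (by rw [two_mul]; gcongr)
  have hDv3 : eLpNorm (fderiv ℝ v) 3 μ ≤ (2 * C') ^ (2⁻¹ : ℝ) * B := by
    refine (eLpNorm_le_eLpNorm_rpow_half_mul_eLpNorm_rpow_half (p := 2) (r := 6) ?_
      hDv_cont.aestronglyMeasurable).trans ?_
    · rw [← ENNReal.toReal_eq_toReal_iff' (by simp) (by simp [ENNReal.mul_eq_top]),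
        ENNReal.toReal_add (by simp) (by simp)]
      norm_num
    calc eLpNorm (fderiv ℝ v) 2 μ ^ (2⁻¹ : ℝ) * eLpNorm (fderiv ℝ v) 6 μ ^ (2⁻¹ : ℝ)
        ≤ B ^ (2⁻¹ : ℝ) * ((2 * C') * B) ^ (2⁻¹ : ℝ) := by
          rw [mul_assoc, mul_left_comm]; gcongr
      _ = (2 * C') ^ (2⁻¹ : ℝ) * B := by
          rw [ENNReal.mul_rpow_of_nonneg _ _ (by norm_num), mul_left_comm,
            ← ENNReal.rpow_add_of_nonneg _ _ (by norm_num) (by norm_num)]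
          norm_num
  have : ENNReal.HolderTriple 6 3 2 := ⟨by
    rw [← ENNReal.toReal_eq_toReal_iff' (by simp) (by simp),
      ENNReal.toReal_add (by simp) (by simp)]
    norm_num⟩
  calc eLpNorm (fun x => fderiv ℝ v x (u x)) 2 μ
        ≤ eLpNorm u 6 μ * eLpNorm (fderiv ℝ v) 3 μ := by
        simpa using eLpNorm_le_eLpNorm_mul_eLpNorm'_of_norm (p := 6) (q := 3) (r := 2)
          u.continuous.aestronglyMeasurable hDv_cont.aestronglyMeasurable (fun a L => L a) 1
          (.of_forall fun x => by simpa [mul_comm] using (fderiv ℝ v x).le_opNorm (u x))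
    _ ≤ C * (2 * A) * ((2 * C') ^ (2⁻¹ : ℝ) * B) := by gcongr
    _ = 2 * C * (2 * C') ^ (2⁻¹ : ℝ) * A * B := by ring

end SchwartzMap

end H2

/-- **The estimate `‖C(u,v)‖ ≤ c‖Au‖·‖Av‖` in concrete Sobolev (H²) form.**
There is `c > 0` such that for all Schwartz vector fields `u, v : ℝ³ → ℝ³`,
`(∫ ‖(u·∇)v‖²)^{1/2} ≤ c·(∫ ‖u‖²+‖Du‖²+‖D²u‖²)^{1/2}·(∫ ‖v‖²+‖Dv‖²+‖D²v‖²)^{1/2}`. -/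
theorem stmt_14 :
    ∃ c : ℝ, 0 < c ∧
      ∀ u v : SchwartzMap (EuclideanSpace ℝ (Fin 3)) (EuclideanSpace ℝ (Fin 3)),
        Real.sqrt (∫ x : EuclideanSpace ℝ (Fin 3), ‖fderiv ℝ (⇑v) x (u x)‖ ^ 2) ≤
          c * Real.sqrt (∫ x : EuclideanSpace ℝ (Fin 3),
                (‖u x‖ ^ 2 + ‖fderiv ℝ (⇑u) x‖ ^ 2 + ‖iteratedFDeriv ℝ 2 (⇑u) x‖ ^ 2)) *
            Real.sqrt (∫ x : EuclideanSpace ℝ (Fin 3),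
                (‖v x‖ ^ 2 + ‖fderiv ℝ (⇑v) x‖ ^ 2 + ‖iteratedFDeriv ℝ 2 (⇑v) x‖ ^ 2)) := by
  have hp' : ((6 : ℝ≥0) : ℝ)⁻¹ =
      ((2 : ℝ≥0) : ℝ)⁻¹ - (Module.finrank ℝ (EuclideanSpace ℝ (Fin 3)) : ℝ)⁻¹ := by
    norm_num
  obtain ⟨C, hC⟩ := exists_eLpNorm_le_mul_eLpNorm_fderiv_add_eLpNorm
    (F := EuclideanSpace ℝ (Fin 3)) volume one_le_two (by simp) hp'
  obtain ⟨C', hC'⟩ := exists_eLpNorm_le_mul_eLpNorm_fderiv_add_eLpNorm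
    (F := EuclideanSpace ℝ (Fin 3) →L[ℝ] EuclideanSpace ℝ (Fin 3)) volume one_le_two (by simp)
    hp'
  set D : ℝ≥0∞ := 2 * C * (2 * C') ^ (2⁻¹ : ℝ)
  refine ⟨D.toReal + 1, by positivity, fun u v => ?_⟩
  have key := SchwartzMap.eLpNorm_fderiv_apply_le volume
    (fun f => by simpa using hC f (f.smooth 1)) (fun f => by simpa using hC' f (f.smooth 1)) u v
  calc _ ≤ (eLpNorm (fun x => fderiv ℝ v x (u x)) 2 volume).toReal :=
        sqrt_integral_norm_sq_le_toReal_eLpNorm _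
    _ ≤ (D * .ofReal (sobolevH2Norm volume u) * .ofReal (sobolevH2Norm volume v)).toReal :=
        ENNReal.toReal_mono (by finiteness) key
    _ = D.toReal * sobolevH2Norm volume u * sobolevH2Norm volume v := by
        simp [ENNReal.toReal_mul, sobolevH2Norm]
    _ ≤ (D.toReal + 1) * sobolevH2Norm volume u * sobolevH2Norm volume v := by
        gcongr
        · exact Real.sqrt_nonneg _
        · exact Real.sqrt_nonneg _
        · linarith
end
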